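/- arXiv:2509.13139 — 4 statements merged into one kernel-verified Lean document; each statement's English description precedes it below -/
import Mathlib

section
/- Let β₁ be the smallest eigenvalue of D^{−1/2} A D^{−1/2} and assume β₁ ≤ 0. For every α > 0, the smallest eigenvalue δ₁ of D̃_α^{−1/2} A D̃_α^{−1/2}, where D̃_α = D + αI, satisfies δ₁ ≥ (max_i d_i / (α + max_i d_i)) · β₁. -/
/-!
Write `N = D^{-1/2} A D^{-1/2}` and `M = D̃^{-1/2} A D̃^{-1/2}`. Then `M = G N G` with the diagonal
contraction `G = diag (√(dᵢ / (dᵢ + α)))`, whose squared entries are at most `dmax / (α + dmax)`.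
For an eigenvector `v` of `M` with eigenvalue `δ₁`, the Rayleigh bound for `N` gives
`δ₁ ‖v‖² = ⟪Gv, N Gv⟫ ≥ β₁ ‖Gv‖² ≥ β₁ · dmax / (α + dmax) · ‖v‖²`, the last step because `β₁ ≤ 0`.
-/

open Matrix

namespace Matrix

variable {ι : Type*} [Fintype ι]

theorem dotProduct_transpose_mul_mul_mulVec (N B : Matrix ι ι ℝ) (x : ι → ℝ) :
    x ⬝ᵥ (Bᵀ * N * B) *ᵥ x = B *ᵥ x ⬝ᵥ N *ᵥ (B *ᵥ x) := by
  rw [← mulVec_mulVec, ← mulVec_mulVec, dotProduct_mulVec, vecMul_transpose]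

variable [DecidableEq ι]

theorem exists_mulVec_eq_smul_of_mem_spectrum {M : Matrix ι ι ℝ} {μ : ℝ}
    (hμ : μ ∈ spectrum ℝ M) : ∃ v ≠ 0, M *ᵥ v = μ • v := by
  rw [← spectrum_toLin', ← Module.End.hasEigenvalue_iff_mem_spectrum] at hμ
  obtain ⟨v, hv⟩ := hμ.exists_hasEigenvector
  exact ⟨v, hv.2, hv.apply_eq_smul⟩

theorem IsHermitian.mul_dotProduct_self_le {N : Matrix ι ι ℝ} (hN : N.IsHermitian) {β : ℝ}
    (hβ : β ∈ lowerBounds (spectrum ℝ N)) (x : ι → ℝ) :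
    β * (x ⬝ᵥ x) ≤ x ⬝ᵥ N *ᵥ x := by
  have hpsd : (N - algebraMap ℝ _ β).PosSemidef := by
    refine posSemidef_iff_isHermitian_and_spectrum_nonneg.mpr ⟨hN.sub ?_, ?_⟩
    · simp [algebraMap_eq_diagonal, Pi.algebraMap_def]
    · rw [← spectrum.sub_singleton_eq]
      rintro _ ⟨μ, hμ, _, rfl, rfl⟩
      exact sub_nonneg.mpr (hβ hμ)
  have := hpsd.dotProduct_mulVec_nonneg x
  simpa [algebraMap_eq_diagonal, Pi.algebraMap_def, sub_mulVec, dotProduct_comm x] using this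

theorem mul_mem_lowerBounds_spectrum_transpose_mul_mul {N B : Matrix ι ι ℝ} (hN : N.IsHermitian)
    {β c : ℝ} (hβ : β ∈ lowerBounds (spectrum ℝ N)) (hβ0 : β ≤ 0)
    (hB : ∀ x, B *ᵥ x ⬝ᵥ B *ᵥ x ≤ c * (x ⬝ᵥ x)) :
    c * β ∈ lowerBounds (spectrum ℝ (Bᵀ * N * B)) := by
  intro δ hδ
  obtain ⟨v, hv0, hv⟩ := exists_mulVec_eq_smul_of_mem_spectrum hδ
  have hvv : 0 < v ⬝ᵥ v := by simpa using dotProduct_star_self_pos_iff.mpr hv0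
  refine le_of_mul_le_mul_right ?_ hvv
  calc c * β * (v ⬝ᵥ v) = β * (c * (v ⬝ᵥ v)) := by ring
    _ ≤ β * (B *ᵥ v ⬝ᵥ B *ᵥ v) := mul_le_mul_of_nonpos_left (hB v) hβ0
    _ ≤ B *ᵥ v ⬝ᵥ N *ᵥ (B *ᵥ v) := hN.mul_dotProduct_self_le hβ _
    _ = δ * (v ⬝ᵥ v) := by
      rw [← dotProduct_transpose_mul_mul_mulVec, hv, dotProduct_smul, smul_eq_mul]

theorem diagonal_mulVec_dotProduct_le {g : ι → ℝ} {c : ℝ} (hg : ∀ i, g i ^ 2 ≤ c)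
    (x : ι → ℝ) : diagonal g *ᵥ x ⬝ᵥ diagonal g *ᵥ x ≤ c * (x ⬝ᵥ x) := by
  simp only [mulVec_diagonal, dotProduct, Finset.mul_sum]
  refine Finset.sum_le_sum fun i _ => ?_
  nlinarith [hg i, mul_self_nonneg (x i)]

theorem diagonal_mul_mul_diagonal_eq {f g h : ι → ℝ} (hfg : ∀ i, f i * g i = h i)
    (A : Matrix ι ι ℝ) :
    diagonal h * A * diagonal h = (diagonal g)ᵀ * (diagonal f * A * diagonal f) * diagonal g := by
  have hgf : diagonal g * diagonal f = diagonal h := by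
    rw [diagonal_mul_diagonal]; exact congrArg diagonal (funext fun i => by rw [mul_comm, hfg])
  have hfg' : diagonal f * diagonal g = diagonal h := by
    rw [diagonal_mul_diagonal]; exact congrArg diagonal (funext hfg)
  calc diagonal h * A * diagonal h = diagonal g * diagonal f * A * (diagonal f * diagonal g) := by
        rw [hgf, hfg']
    _ = _ := by simp only [diagonal_transpose, Matrix.mul_assoc]

theorem IsSymm.isHermitian_diagonal_mul_mul_diagonal {A : Matrix ι ι ℝ} (hA : A.IsSymm)
    (f : ι → ℝ) : (diagonal f * A * diagonal f).IsHermitian := by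
  simpa using isHermitian_conjTranspose_mul_mul (diagonal f) (isHermitian_iff_isSymm.mpr hA)

end Matrix

theorem div_add_le_div_add {a b α : ℝ} (ha : 0 ≤ a) (hab : a ≤ b) (hα : 0 < α) :
    a / (a + α) ≤ b / (b + α) := by
  rw [div_le_div_iff₀ (by linarith) (by linarith)]
  nlinarith

theorem stmt_0_general (n : ℕ) (A : Matrix (Fin n) (Fin n) ℝ)
    (hA : A.IsSymm)
    (d : Fin n → ℝ) (hdpos : ∀ i, 0 < d i)
    (dmax : ℝ) (hdmax : IsGreatest (Set.range d) dmax)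
    (β₁ : ℝ)
    (hβ : IsLeast (spectrum ℝ
      (Matrix.diagonal (fun i => (Real.sqrt (d i))⁻¹) * A *
        Matrix.diagonal (fun i => (Real.sqrt (d i))⁻¹))) β₁)
    (hβ0 : β₁ ≤ 0)
    (α : ℝ) (hα : 0 < α)
    (δ₁ : ℝ)
    (hδ : IsLeast (spectrum ℝ
      (Matrix.diagonal (fun i => (Real.sqrt (d i + α))⁻¹) * A *
        Matrix.diagonal (fun i => (Real.sqrt (d i + α))⁻¹))) δ₁) :
    dmax / (α + dmax) * β₁ ≤ δ₁ := by
  set g : Fin n → ℝ := fun i => Real.sqrt (d i) / Real.sqrt (d i + α)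
  have hfactor : ∀ i, (Real.sqrt (d i))⁻¹ * g i = (Real.sqrt (d i + α))⁻¹ := fun i => by
    have : Real.sqrt (d i) ≠ 0 := (Real.sqrt_pos.mpr (hdpos i)).ne'
    simp only [g]
    field_simp
  have hg : ∀ i, g i ^ 2 ≤ dmax / (α + dmax) := fun i => by
    rw [div_pow, Real.sq_sqrt (hdpos i).le, Real.sq_sqrt (by linarith [hdpos i]), add_comm α]
    exact div_add_le_div_add (hdpos i).le (hdmax.2 ⟨i, rfl⟩) hα
  rw [diagonal_mul_mul_diagonal_eq hfactor] at hδ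
  exact mul_mem_lowerBounds_spectrum_transpose_mul_mul (hA.isHermitian_diagonal_mul_mul_diagonal _)
    hβ.2 hβ0 (diagonal_mulVec_dotProduct_le hg) hδ.1

/-- Let β₁ be the smallest eigenvalue of D^{−1/2} A D^{−1/2} and assume β₁ ≤ 0.
For every α > 0, the smallest eigenvalue δ₁ of D̃_α^{−1/2} A D̃_α^{−1/2}, where D̃_α = D + αI,
satisfies δ₁ ≥ (max_i d_i / (α + max_i d_i)) · β₁. -/
theorem stmt_0 (n : ℕ) (hn : 0 < n) (A : Matrix (Fin n) (Fin n) ℝ)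
    (hA : A.IsSymm) (hdiag : ∀ i, A i i = 0)
    (h01 : ∀ i j, A i j = 0 ∨ A i j = 1)
    (d : Fin n → ℝ) (hd : ∀ i, d i = ∑ j, A i j) (hdpos : ∀ i, 0 < d i)
    (dmax : ℝ) (hdmax : IsGreatest (Set.range d) dmax)
    (β₁ : ℝ)
    (hβ : IsLeast (spectrum ℝ
      (Matrix.diagonal (fun i => (Real.sqrt (d i))⁻¹) * A *
        Matrix.diagonal (fun i => (Real.sqrt (d i))⁻¹))) β₁)
    (hβ0 : β₁ ≤ 0)
    (α : ℝ) (hα : 0 < α)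
    (δ₁ : ℝ)
    (hδ : IsLeast (spectrum ℝ
      (Matrix.diagonal (fun i => (Real.sqrt (d i + α))⁻¹) * A *
        Matrix.diagonal (fun i => (Real.sqrt (d i + α))⁻¹))) δ₁) :
    dmax / (α + dmax) * β₁ ≤ δ₁ :=
  stmt_0_general n A hA d hdpos dmax hdmax β₁ hβ hβ0 α hα δ₁ hδ
end

section
/- Let β₁ be the smallest eigenvalue of D^{−1/2} A D^{−1/2} and assume β₁ ≤ 0. For every γ > 0, the smallest eigenvalue δ₁ of D̃_γ^{−1/2} A D̃_γ^{−1/2}, where D̃_γ = (1+γ)D + I, satisfies δ₁ ≥ (max_i d_i / (1 + (1+γ) max_i d_i)) · β₁. -/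
/-!
With `h i = √(d i) / √((1 + γ) d i + 1)` and `H = diag h`, the matrix `D̃^{-1/2} A D̃^{-1/2}` is the
congruence `H (D^{-1/2} A D^{-1/2}) H`, and `h i ^ 2 = d i / ((1 + γ) d i + 1) ≤ c`, where
`c = dmax / (1 + (1 + γ) dmax)`. In the Loewner order, `β₁ ≤ D^{-1/2} A D^{-1/2}` gives
`β₁ H² ≤ H (D^{-1/2} A D^{-1/2}) H`, and `β₁ ≤ 0` with `H² ≤ c` gives `c β₁ ≤ β₁ H²`.
-/

open Matrix
open scoped MatrixOrder

namespace Matrix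

variable {n : Type*} [Fintype n] [DecidableEq n]

lemma algebraMap_mul_le_diagonal_mul_mul_diagonal {B : Matrix n n ℝ} {β c : ℝ}
    (hB : algebraMap ℝ _ β ≤ B) (hβ : β ≤ 0) {h : n → ℝ} (hh : ∀ i, h i ^ 2 ≤ c) :
    algebraMap ℝ _ (c * β) ≤ diagonal h * B * diagonal h := by
  have hconj := star_left_conjugate_le_conjugate hB (diagonal h)
  rw [star_eq_conjTranspose, diagonal_conjTranspose, star_trivial] at hconj
  refine le_trans ?_ hconj
  rw [le_iff, algebraMap_eq_diagonal, algebraMap_eq_diagonal, diagonal_mul_diagonal,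
    diagonal_mul_diagonal, diagonal_sub]
  refine PosSemidef.diagonal fun i => ?_
  simp only [Pi.zero_apply, Pi.algebraMap_apply, Algebra.algebraMap_self,
    RingHom.id_apply, sub_nonneg]
  nlinarith [hh i]

lemma _root_.IsSelfAdjoint.diagonal_mul_mul_diagonal {B : Matrix n n ℝ} (hB : IsSelfAdjoint B)
    (h : n → ℝ) : IsSelfAdjoint (diagonal h * B * diagonal h) := by
  simpa only [star_eq_conjTranspose, diagonal_conjTranspose, star_trivial]
    using hB.conjugate' (diagonal h)

lemma le_of_mem_spectrum_diagonal_mul_mul_diagonal {B : Matrix n n ℝ} (hB : IsSelfAdjoint B)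
    {β c : ℝ} (hβB : ∀ μ ∈ spectrum ℝ B, β ≤ μ) (hβ : β ≤ 0) {h : n → ℝ}
    (hh : ∀ i, h i ^ 2 ≤ c) : ∀ μ ∈ spectrum ℝ (diagonal h * B * diagonal h), c * β ≤ μ := by
  rw [← algebraMap_le_iff_le_spectrum (hB.diagonal_mul_mul_diagonal h)]
  exact algebraMap_mul_le_diagonal_mul_mul_diagonal
    ((algebraMap_le_iff_le_spectrum hB).2 hβB) hβ hh

end Matrix

lemma div_mul_add_one_le_div_mul_add_one {a x y : ℝ} (ha : 0 ≤ a) (hx : 0 ≤ x) (hxy : x ≤ y) :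
    x / (a * x + 1) ≤ y / (a * y + 1) := by
  rw [div_le_div_iff₀ (by positivity) (by nlinarith)]
  nlinarith

theorem stmt_2_general (n : ℕ) (A : Matrix (Fin n) (Fin n) ℝ)
    (hA : A.IsSymm)
    (d : Fin n → ℝ) (hdpos : ∀ i, 0 < d i)
    (dmax : ℝ) (hdmax : IsGreatest (Set.range d) dmax)
    (β₁ : ℝ)
    (hβ : IsLeast (spectrum ℝ
      (Matrix.diagonal (fun i => (Real.sqrt (d i))⁻¹) * A *
        Matrix.diagonal (fun i => (Real.sqrt (d i))⁻¹))) β₁)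
    (hβ0 : β₁ ≤ 0)
    (γ : ℝ) (hγ : 0 < γ)
    (δ₁ : ℝ)
    (hδ : IsLeast (spectrum ℝ
      (Matrix.diagonal (fun i => (Real.sqrt ((1 + γ) * d i + 1))⁻¹) * A *
        Matrix.diagonal (fun i => (Real.sqrt ((1 + γ) * d i + 1))⁻¹))) δ₁) :
    dmax / (1 + (1 + γ) * dmax) * β₁ ≤ δ₁ := by
  set g : Fin n → ℝ := fun i => (Real.sqrt (d i))⁻¹
  set f : Fin n → ℝ := fun i => (Real.sqrt ((1 + γ) * d i + 1))⁻¹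
  set h : Fin n → ℝ := fun i => Real.sqrt (d i) / Real.sqrt ((1 + γ) * d i + 1)
  have hf : diagonal f = diagonal h * diagonal g := by
    rw [diagonal_mul_diagonal]
    congr 1
    funext i
    simp only [f, g, h]
    field_simp [(Real.sqrt_pos.2 (hdpos i)).ne']
  have hcongr :
      diagonal f * A * diagonal f = diagonal h * (diagonal g * A * diagonal g) * diagonal h := by
    rw [hf]
    nth_rw 2 [(commute_diagonal h g).eq]
    simp only [Matrix.mul_assoc]
  have hh : ∀ i, h i ^ 2 ≤ dmax / (1 + (1 + γ) * dmax) := fun i => by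
    rw [div_pow, Real.sq_sqrt (hdpos i).le, Real.sq_sqrt (by nlinarith [hdpos i]),
      add_comm 1 ((1 + γ) * dmax)]
    exact div_mul_add_one_le_div_mul_add_one (by linarith) (hdpos i).le (hdmax.2 ⟨i, rfl⟩)
  have hA' : IsSelfAdjoint A := by
    rwa [IsSelfAdjoint, star_eq_conjTranspose, conjTranspose_eq_transpose_of_trivial]
  exact le_of_mem_spectrum_diagonal_mul_mul_diagonal (hA'.diagonal_mul_mul_diagonal g)
    (fun μ hμ => hβ.2 hμ) hβ0 hh δ₁ (hcongr ▸ hδ.1)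

/-- Let β₁ be the smallest eigenvalue of D^{−1/2} A D^{−1/2} and assume β₁ ≤ 0.
For every γ > 0, the smallest eigenvalue δ₁ of D̃_γ^{−1/2} A D̃_γ^{−1/2}, where
D̃_γ = (1+γ)D + I, satisfies δ₁ ≥ (max_i d_i / (1 + (1+γ) max_i d_i)) · β₁. -/
theorem stmt_2 (n : ℕ) (hn : 0 < n) (A : Matrix (Fin n) (Fin n) ℝ)
    (hA : A.IsSymm) (hdiag : ∀ i, A i i = 0)
    (h01 : ∀ i j, A i j = 0 ∨ A i j = 1)
    (d : Fin n → ℝ) (hd : ∀ i, d i = ∑ j, A i j) (hdpos : ∀ i, 0 < d i)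
    (dmax : ℝ) (hdmax : IsGreatest (Set.range d) dmax)
    (β₁ : ℝ)
    (hβ : IsLeast (spectrum ℝ
      (Matrix.diagonal (fun i => (Real.sqrt (d i))⁻¹) * A *
        Matrix.diagonal (fun i => (Real.sqrt (d i))⁻¹))) β₁)
    (hβ0 : β₁ ≤ 0)
    (γ : ℝ) (hγ : 0 < γ)
    (δ₁ : ℝ)
    (hδ : IsLeast (spectrum ℝ
      (Matrix.diagonal (fun i => (Real.sqrt ((1 + γ) * d i + 1))⁻¹) * A *
        Matrix.diagonal (fun i => (Real.sqrt ((1 + γ) * d i + 1))⁻¹))) δ₁) :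
    dmax / (1 + (1 + γ) * dmax) * β₁ ≤ δ₁ :=
  stmt_2_general n A hA d hdpos dmax hdmax β₁ hβ hβ0 γ hγ δ₁ hδ
end

section
/- Let β₁ be the smallest eigenvalue of D^{−1/2} A D^{−1/2} and assume β₁ ≤ 0. For every α > 0, the largest eigenvalue λ_α^max of the symmetrically normalized Laplacian L̃_α = I − D̃_α^{−1/2} Ã_α D̃_α^{−1/2}, where Ã_α = A + αI and D̃_α = D + αI, satisfies λ_α^max ≤ max_i d_i · (1 − β₁) / (α + max_i d_i). -/
/-!
With `z = D̃_α^{-1/2} x` one has `xᵀ L̃_α x = ‖x‖² - zᵀ A z - α ‖z‖²`, and applying the bound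
`yᵀ (D^{-1/2} A D^{-1/2}) y ≥ β₁ ‖y‖²` to `y = D^{1/2} z` gives `zᵀ A z ≥ β₁ ∑ dᵢ zᵢ²`.
Hence `xᵀ L̃_α x ≤ ∑ dᵢ (1 - β₁) / (dᵢ + α) · xᵢ²`; since `1 - β₁ ≥ 0` each weight increases
with `dᵢ`, so it is at most `d_max (1 - β₁) / (α + d_max)`. Evaluating at an eigenvector for
`λ_α^max` gives the claim.
-/

open Matrix

section

variable {ι : Type*} [Fintype ι] [DecidableEq ι]

theorem Matrix.IsHermitian.le_dotProduct_mulVec_of_forall_le_spectrum {M : Matrix ι ι ℝ}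
    (hM : M.IsHermitian) {c : ℝ} (hc : ∀ μ ∈ spectrum ℝ M, c ≤ μ) (x : ι → ℝ) :
    c * (x ⬝ᵥ x) ≤ x ⬝ᵥ M *ᵥ x := by
  have hpsd : (M - algebraMap ℝ _ c).PosSemidef := by
    refine posSemidef_iff_isHermitian_and_spectrum_nonneg.mpr ⟨?_, ?_⟩
    · simpa [Algebra.algebraMap_eq_smul_one] using hM.sub (isHermitian_one.smul (.all c))
    · rw [← spectrum.sub_singleton_eq]
      rintro _ ⟨μ, hμ, c, rfl, rfl⟩
      exact sub_nonneg.mpr (hc μ hμ)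
  have := hpsd.dotProduct_mulVec_nonneg x
  simp only [Algebra.algebraMap_eq_smul_one, sub_mulVec, smul_mulVec, one_mulVec,
    dotProduct_sub, dotProduct_smul, smul_eq_mul, star_trivial] at this
  linarith

theorem Matrix.le_of_mem_spectrum_of_forall_dotProduct_mulVec_le {M : Matrix ι ι ℝ} {C μ : ℝ}
    (hC : ∀ x, x ⬝ᵥ M *ᵥ x ≤ C * (x ⬝ᵥ x)) (hμ : μ ∈ spectrum ℝ M) : μ ≤ C := by
  rw [← spectrum_toLin', ← Module.End.hasEigenvalue_iff_mem_spectrum] at hμ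
  obtain ⟨x, hx⟩ := hμ.exists_hasEigenvector
  have hMx : M *ᵥ x = μ • x := by simpa using hx.apply_eq_smul
  have hxx : 0 < x ⬝ᵥ x := by simpa using dotProduct_self_star_pos_iff.mpr hx.2
  have := hC x
  rw [hMx, dotProduct_smul, smul_eq_mul] at this
  exact le_of_mul_le_mul_right this hxx

theorem Matrix.dotProduct_diagonal_mul_mul_diagonal_mulVec {R : Type*} [CommSemiring R] (s x : ι → R) (M : Matrix ι ι R) :
    x ⬝ᵥ (diagonal s * M * diagonal s) *ᵥ x = (s * x) ⬝ᵥ M *ᵥ (s * x) := by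
  have hvec : x ᵥ* diagonal s = s * x := by ext; simp [vecMul_diagonal, mul_comm]
  have hmul : diagonal s *ᵥ x = s * x := by ext; simp [mulVec_diagonal]
  rw [← mulVec_mulVec, ← mulVec_mulVec, dotProduct_mulVec x, hvec, hmul]

noncomputable def symNormalize (d : ι → ℝ) (M : Matrix ι ι ℝ) : Matrix ι ι ℝ :=
  diagonal (fun i => (√(d i))⁻¹) * M * diagonal (fun i => (√(d i))⁻¹)

theorem isHermitian_symNormalize (d : ι → ℝ) {M : Matrix ι ι ℝ} (hM : M.IsSymm) :
    (symNormalize d M).IsHermitian := by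
  simpa [symNormalize] using isHermitian_conjTranspose_mul_mul
    (diagonal fun i => (√(d i))⁻¹) (A := M) (by simpa [IsHermitian] using hM.eq)

theorem dotProduct_symNormalize_mulVec (d x : ι → ℝ) (M : Matrix ι ι ℝ) :
    x ⬝ᵥ symNormalize d M *ᵥ x = (fun i => x i / √(d i)) ⬝ᵥ M *ᵥ (fun i => x i / √(d i)) := by
  rw [symNormalize, dotProduct_diagonal_mul_mul_diagonal_mulVec]
  simp only [div_eq_inv_mul]
  rfl

theorem mul_sum_mul_sq_le_dotProduct_mulVec_of_symNormalize {d : ι → ℝ} (hd : ∀ i, 0 < d i) {M : Matrix ι ι ℝ}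
    (hM : M.IsSymm) {β : ℝ} (hβ : ∀ μ ∈ spectrum ℝ (symNormalize d M), β ≤ μ) (z : ι → ℝ) :
    β * ∑ i, d i * z i ^ 2 ≤ z ⬝ᵥ M *ᵥ z := by
  have h := (isHermitian_symNormalize d hM).le_dotProduct_mulVec_of_forall_le_spectrum hβ
    (fun i => √(d i) * z i)
  have hz : (fun i => √(d i) * z i / √(d i)) = z :=
    funext fun i => mul_div_cancel_left₀ _ (Real.sqrt_pos.mpr (hd i)).ne'
  rw [dotProduct_symNormalize_mulVec, hz] at h
  convert h using 2
  simp only [dotProduct]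
  refine Finset.sum_congr rfl fun i _ => ?_
  rw [mul_mul_mul_comm, Real.mul_self_sqrt (hd i).le, sq]

theorem dotProduct_one_sub_symNormalize_add_smul_one_mulVec_le {d : ι → ℝ} (hd : ∀ i, 0 < d i)
    {A : Matrix ι ι ℝ} (hA : A.IsSymm) {β : ℝ}
    (hβ : ∀ μ ∈ spectrum ℝ (symNormalize d A), β ≤ μ) {α : ℝ} (hα : 0 ≤ α) (x : ι → ℝ) :
    x ⬝ᵥ (1 - symNormalize (fun i => d i + α) (A + α • 1)) *ᵥ x ≤
      ∑ i, d i * (1 - β) / (d i + α) * x i ^ 2 := by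
  set z : ι → ℝ := fun i => x i / √(d i + α)
  have hdα : ∀ i, 0 < d i + α := fun i => add_pos_of_pos_of_nonneg (hd i) hα
  have hz : ∀ i, z i ^ 2 = x i ^ 2 / (d i + α) := fun i => by
    rw [div_pow, Real.sq_sqrt (hdα i).le]
  have hquad : x ⬝ᵥ (1 - symNormalize (fun i => d i + α) (A + α • 1)) *ᵥ x =
      ∑ i, (x i ^ 2 - α * z i ^ 2) - z ⬝ᵥ A *ᵥ z := by
    rw [sub_mulVec, one_mulVec, dotProduct_sub, dotProduct_symNormalize_mulVec, add_mulVec,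
      smul_mulVec, one_mulVec, dotProduct_add, dotProduct_smul, smul_eq_mul]
    simp only [dotProduct, Finset.sum_sub_distrib, Finset.mul_sum, sq]
    ring
  have hlower := mul_sum_mul_sq_le_dotProduct_mulVec_of_symNormalize hd hA hβ z
  calc x ⬝ᵥ (1 - symNormalize (fun i => d i + α) (A + α • 1)) *ᵥ x
      ≤ ∑ i, (x i ^ 2 - α * z i ^ 2) - β * ∑ i, d i * z i ^ 2 := by linarith
    _ = ∑ i, d i * (1 - β) / (d i + α) * x i ^ 2 := by
      rw [Finset.mul_sum, ← Finset.sum_sub_distrib]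
      refine Finset.sum_congr rfl fun i _ => ?_
      rw [hz]
      field_simp [(hdα i).ne']
      ring

end

theorem mul_div_add_le_mul_div_add {a b c α : ℝ} (ha : 0 < a) (hab : a ≤ b) (hc : 0 ≤ c)
    (hα : 0 ≤ α) : a * c / (a + α) ≤ b * c / (α + b) := by
  rw [div_le_div_iff₀ (by linarith) (by linarith)]
  nlinarith [mul_nonneg (mul_nonneg hc hα) (sub_nonneg.mpr hab)]

theorem stmt_3_general (n : ℕ) (A : Matrix (Fin n) (Fin n) ℝ)
    (hA : A.IsSymm)
    (d : Fin n → ℝ) (hdpos : ∀ i, 0 < d i)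
    (dmax : ℝ) (hdmax : IsGreatest (Set.range d) dmax)
    (β₁ : ℝ)
    (hβ : IsLeast (spectrum ℝ
      (Matrix.diagonal (fun i => (Real.sqrt (d i))⁻¹) * A *
        Matrix.diagonal (fun i => (Real.sqrt (d i))⁻¹))) β₁)
    (hβ0 : β₁ ≤ 0)
    (α : ℝ) (hα : 0 < α)
    (lammax : ℝ)
    (hlam : IsGreatest (spectrum ℝ
      ((1 : Matrix (Fin n) (Fin n) ℝ) -
        Matrix.diagonal (fun i => (Real.sqrt (d i + α))⁻¹) *
          (A + α • (1 : Matrix (Fin n) (Fin n) ℝ)) *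
        Matrix.diagonal (fun i => (Real.sqrt (d i + α))⁻¹))) lammax) :
    lammax ≤ dmax * (1 - β₁) / (α + dmax) := by
  refine le_of_mem_spectrum_of_forall_dotProduct_mulVec_le (fun x => ?_) hlam.1
  calc x ⬝ᵥ (1 - symNormalize (fun i => d i + α) (A + α • 1)) *ᵥ x
      ≤ ∑ i, d i * (1 - β₁) / (d i + α) * x i ^ 2 :=
        dotProduct_one_sub_symNormalize_add_smul_one_mulVec_le hdpos hA
          (fun _ hμ => hβ.2 hμ) hα.le x
    _ ≤ ∑ i, dmax * (1 - β₁) / (α + dmax) * x i ^ 2 :=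
        Finset.sum_le_sum fun i _ => mul_le_mul_of_nonneg_right
          (mul_div_add_le_mul_div_add (hdpos i) (hdmax.2 ⟨i, rfl⟩) (by linarith) hα.le)
          (sq_nonneg _)
    _ = dmax * (1 - β₁) / (α + dmax) * (x ⬝ᵥ x) := by
        simp only [Finset.mul_sum, dotProduct, sq]

/-- Let β₁ be the smallest eigenvalue of D^{−1/2} A D^{−1/2} and assume β₁ ≤ 0.
For every α > 0, the largest eigenvalue λ_α^max of L̃_α = I − D̃_α^{−1/2} Ã_α D̃_α^{−1/2},
where Ã_α = A + αI and D̃_α = D + αI, satisfies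
λ_α^max ≤ max_i d_i · (1 − β₁) / (α + max_i d_i). -/
theorem stmt_3 (n : ℕ) (hn : 0 < n) (A : Matrix (Fin n) (Fin n) ℝ)
    (hA : A.IsSymm) (hdiag : ∀ i, A i i = 0)
    (h01 : ∀ i j, A i j = 0 ∨ A i j = 1)
    (d : Fin n → ℝ) (hd : ∀ i, d i = ∑ j, A i j) (hdpos : ∀ i, 0 < d i)
    (dmax : ℝ) (hdmax : IsGreatest (Set.range d) dmax)
    (β₁ : ℝ)
    (hβ : IsLeast (spectrum ℝ
      (Matrix.diagonal (fun i => (Real.sqrt (d i))⁻¹) * A *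
        Matrix.diagonal (fun i => (Real.sqrt (d i))⁻¹))) β₁)
    (hβ0 : β₁ ≤ 0)
    (α : ℝ) (hα : 0 < α)
    (lammax : ℝ)
    (hlam : IsGreatest (spectrum ℝ
      ((1 : Matrix (Fin n) (Fin n) ℝ) -
        Matrix.diagonal (fun i => (Real.sqrt (d i + α))⁻¹) *
          (A + α • (1 : Matrix (Fin n) (Fin n) ℝ)) *
        Matrix.diagonal (fun i => (Real.sqrt (d i + α))⁻¹))) lammax) :
    lammax ≤ dmax * (1 - β₁) / (α + dmax) :=
  stmt_3_general n A hA d hdpos dmax hdmax β₁ hβ hβ0 α hα lammax hlam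
end

section
/- Let β₁ be the smallest eigenvalue of D^{−1/2} A D^{−1/2} and assume β₁ ≤ 0. For every γ > 0, the largest eigenvalue λ_γ^max of the symmetrically normalized Laplacian L̃_γ = I − D̃_γ^{−1/2} Ã_γ D̃_γ^{−1/2}, where Ã_γ = (γ+1)A + I and D̃_γ = (γ+1)D + I, satisfies λ_γ^max ≤ (1+γ) max_i d_i · (1 − β₁) / (1 + (1+γ) max_i d_i). -/
/-!
Work in the Loewner order. The spectral bound on `D^{-1/2} A D^{-1/2}` says exactly that
`β₁ D ≤ A`; conjugating by `D̃_γ^{-1/2}` then bounds `L̃_γ` above by the diagonal matrix with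
entries `(γ+1) dᵢ (1 - β₁) / ((γ+1) dᵢ + 1)`, and each of these is at most the claimed constant
because `t ↦ t / (1 + t)` is increasing and `1 - β₁ ≥ 0`.
-/
open Matrix
open scoped MatrixOrder

lemma mul_div_add_one_le_mul_div_add_one {a b k : ℝ} (ha : 0 ≤ a) (hab : a ≤ b) (hk : 0 ≤ k) :
    a * k / (a + 1) ≤ b * k / (b + 1) := by
  rw [div_le_div_iff₀ (by linarith) (by linarith)]
  nlinarith [mul_nonneg hk (sub_nonneg.mpr hab)]

namespace Matrix

variable {ι : Type*} [DecidableEq ι]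

lemma diagonal_le_diagonal_iff {f g : ι → ℝ} : diagonal f ≤ diagonal g ↔ f ≤ g := by
  rw [le_iff, diagonal_sub, posSemidef_diagonal_iff, Pi.le_def]
  simp only [sub_nonneg]

variable [Fintype ι]

lemma spectrum_le_of_le_algebraMap {M : Matrix ι ι ℝ} {r : ℝ} (h : M ≤ algebraMap ℝ _ r) :
    ∀ x ∈ spectrum ℝ M, x ≤ r := by
  have hr : (algebraMap ℝ (Matrix ι ι ℝ) r).IsHermitian := by
    rw [algebraMap_eq_diagonal]; exact isHermitian_diagonal _
  have hM : M.IsHermitian := by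
    simpa using hr.sub (le_iff.mp h).isHermitian
  exact (le_algebraMap_iff_spectrum_le (ha := hM.isSelfAdjoint)).mp h

lemma smul_diagonal_le_of_le_spectrum {A : Matrix ι ι ℝ} (hA : A.IsSymm) {d : ι → ℝ}
    (hd : ∀ i, 0 < d i) {β : ℝ}
    (hβ : ∀ μ ∈ spectrum ℝ (diagonal (fun i => (√(d i))⁻¹) * A * diagonal (fun i => (√(d i))⁻¹)),
      β ≤ μ) :
    β • diagonal d ≤ A := by
  set N := diagonal (fun i => (√(d i))⁻¹) * A * diagonal (fun i => (√(d i))⁻¹)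
  have hN : N.IsHermitian := by
    simp only [IsHermitian, N, conjTranspose_mul, (isHermitian_diagonal _).eq, mul_assoc]
    rw [conjTranspose_eq_transpose_of_trivial, hA.eq]
  have hβN : algebraMap ℝ _ β ≤ N :=
    (algebraMap_le_iff_le_spectrum (ha := hN.isSelfAdjoint)).mpr hβ
  have hsqrt : ∀ i, √(d i) ≠ 0 := fun i => (Real.sqrt_pos.mpr (hd i)).ne'
  convert (isHermitian_diagonal fun i => √(d i)).isSelfAdjoint.conjugate_le_conjugate hβN using 1
  · rw [algebraMap_eq_diagonal, diagonal_mul_diagonal, diagonal_mul_diagonal, ← diagonal_smul]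
    congr 1; ext i
    simp only [Pi.smul_apply, smul_eq_mul, Pi.algebraMap_apply, Algebra.algebraMap_self,
      Real.ringHom_apply]
    linear_combination -β * Real.mul_self_sqrt (hd i).le
  · simp only [N, ← mul_assoc, diagonal_mul_diagonal, mul_inv_cancel₀ (hsqrt _), diagonal_one,
      one_mul]
    simp only [mul_assoc, diagonal_mul_diagonal, inv_mul_cancel₀ (hsqrt _), diagonal_one, mul_one]

lemma one_sub_conj_le_diagonal {A : Matrix ι ι ℝ} {d : ι → ℝ} {β : ℝ}
    (hAd : β • diagonal d ≤ A) (hd : ∀ i, 0 ≤ d i) {g : ℝ} (hg : 0 ≤ g) :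
    1 - diagonal (fun i => (√(g * d i + 1))⁻¹) * (g • A + 1) *
        diagonal (fun i => (√(g * d i + 1))⁻¹) ≤
      diagonal fun i => g * d i * (1 - β) / (g * d i + 1) := by
  have hs : ∀ i, 0 < g * d i + 1 := fun i => by nlinarith [hd i]
  have hlow : diagonal (fun i => g * β * d i + 1) ≤ g • A + 1 := by
    have : diagonal (fun i => g * β * d i + 1) = g • β • diagonal d + 1 := by
      rw [← diagonal_one, smul_smul, ← diagonal_smul, diagonal_add]
      rfl
    rw [this, le_iff, add_sub_add_right_eq_sub, ← smul_sub]
    exact (le_iff.mp hAd).smul hg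
  have hconj := (isHermitian_diagonal fun i => (√(g * d i + 1))⁻¹).isSelfAdjoint
    |>.conjugate_le_conjugate hlow
  refine (sub_le_sub_left hconj 1).trans_eq ?_
  rw [diagonal_mul_diagonal, diagonal_mul_diagonal, ← diagonal_one, diagonal_sub]
  congr 1; ext i
  have hsi := (hs i).ne'
  field_simp
  rw [Real.sq_sqrt (hs i).le]
  field_simp
  ring

end Matrix

theorem stmt_4_general (n : ℕ) (A : Matrix (Fin n) (Fin n) ℝ)
    (hA : A.IsSymm)
    (d : Fin n → ℝ) (hdpos : ∀ i, 0 < d i)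
    (dmax : ℝ) (hdmax : IsGreatest (Set.range d) dmax)
    (β₁ : ℝ)
    (hβ : IsLeast (spectrum ℝ
      (Matrix.diagonal (fun i => (Real.sqrt (d i))⁻¹) * A *
        Matrix.diagonal (fun i => (Real.sqrt (d i))⁻¹))) β₁)
    (hβ0 : β₁ ≤ 0)
    (γ : ℝ) (hγ : 0 < γ)
    (lammax : ℝ)
    (hlam : IsGreatest (spectrum ℝ
      ((1 : Matrix (Fin n) (Fin n) ℝ) -
        Matrix.diagonal (fun i => (Real.sqrt ((γ + 1) * d i + 1))⁻¹) *
          ((γ + 1) • A + (1 : Matrix (Fin n) (Fin n) ℝ)) *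
        Matrix.diagonal (fun i => (Real.sqrt ((γ + 1) * d i + 1))⁻¹))) lammax) :
    lammax ≤ (1 + γ) * dmax * (1 - β₁) / (1 + (1 + γ) * dmax) := by
  have hAd : β₁ • diagonal d ≤ A := smul_diagonal_le_of_le_spectrum hA hdpos fun μ hμ => hβ.2 hμ
  have hentry (i : Fin n) : (γ + 1) * d i * (1 - β₁) / ((γ + 1) * d i + 1) ≤
      (1 + γ) * dmax * (1 - β₁) / (1 + (1 + γ) * dmax) := by
    rw [add_comm 1 ((1 + γ) * dmax), add_comm 1 γ]
    exact mul_div_add_one_le_mul_div_add_one (by nlinarith [hdpos i])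
      (mul_le_mul_of_nonneg_left (hdmax.2 ⟨i, rfl⟩) (by linarith)) (by linarith)
  refine spectrum_le_of_le_algebraMap ?_ lammax hlam.1
  calc _ ≤ diagonal fun i => (γ + 1) * d i * (1 - β₁) / ((γ + 1) * d i + 1) :=
        one_sub_conj_le_diagonal hAd (fun i => (hdpos i).le) (by linarith)
    _ ≤ algebraMap ℝ _ _ := by
        rw [algebraMap_eq_diagonal]
        exact diagonal_le_diagonal_iff.mpr hentry

/-- Let β₁ be the smallest eigenvalue of D^{−1/2} A D^{−1/2} and assume β₁ ≤ 0.
For every γ > 0, the largest eigenvalue λ_γ^max of L̃_γ = I − D̃_γ^{−1/2} Ã_γ D̃_γ^{−1/2},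
where Ã_γ = (γ+1)A + I and D̃_γ = (γ+1)D + I, satisfies
λ_γ^max ≤ (1+γ) max_i d_i · (1 − β₁) / (1 + (1+γ) max_i d_i). -/
theorem stmt_4 (n : ℕ) (hn : 0 < n) (A : Matrix (Fin n) (Fin n) ℝ)
    (hA : A.IsSymm) (hdiag : ∀ i, A i i = 0)
    (h01 : ∀ i j, A i j = 0 ∨ A i j = 1)
    (d : Fin n → ℝ) (hd : ∀ i, d i = ∑ j, A i j) (hdpos : ∀ i, 0 < d i)
    (dmax : ℝ) (hdmax : IsGreatest (Set.range d) dmax)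
    (β₁ : ℝ)
    (hβ : IsLeast (spectrum ℝ
      (Matrix.diagonal (fun i => (Real.sqrt (d i))⁻¹) * A *
        Matrix.diagonal (fun i => (Real.sqrt (d i))⁻¹))) β₁)
    (hβ0 : β₁ ≤ 0)
    (γ : ℝ) (hγ : 0 < γ)
    (lammax : ℝ)
    (hlam : IsGreatest (spectrum ℝ
      ((1 : Matrix (Fin n) (Fin n) ℝ) -
        Matrix.diagonal (fun i => (Real.sqrt ((γ + 1) * d i + 1))⁻¹) *
          ((γ + 1) • A + (1 : Matrix (Fin n) (Fin n) ℝ)) *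
        Matrix.diagonal (fun i => (Real.sqrt ((γ + 1) * d i + 1))⁻¹))) lammax) :
    lammax ≤ (1 + γ) * dmax * (1 - β₁) / (1 + (1 + γ) * dmax) :=
  stmt_4_general n A hA d hdpos dmax hdmax β₁ hβ hβ0 γ hγ lammax hlam
end
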